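/- arXiv:1612.02100 — 2 statements merged into one kernel-verified Lean document; each statement's English description precedes it below -/
import Mathlib

section
/- The rational function J(k) = k^3(k^3+8)^3 / (64(k^3-1)^3) is invariant under the involution η(k) = (k+2)/(k-1); that is, for every real k with k ≠ 1 and η(k)^3 ≠ 1, J(η(k)) = J(k). -/
noncomputable def η (k : ℝ) : ℝ := (k + 2) / (k - 1)

noncomputable def Jmod (k : ℝ) : ℝ := k^3 * (k^3 + 8)^3 / (64 * (k^3 - 1)^3)

/-! Both factors of `Jmod` transform well under `η`: clearing the denominator `(k - 1)³`,
`η(k)³ + 8 = 9k(k² - 2k + 4) / (k - 1)³` and `η(k)³ - 1 = 9(k² + k + 1) / (k - 1)³`.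
Since `k³ + 8 = (k + 2)(k² - 2k + 4)` and `k³ - 1 = (k - 1)(k² + k + 1)`, substituting these
into `Jmod (η k)` leaves exactly `Jmod k` once the factors `9` and `(k - 1)` cancel. -/

lemma sq_add_self_add_one_pos (k : ℝ) : 0 < k ^ 2 + k + 1 := by
  nlinarith [sq_nonneg (2 * k + 1)]

lemma η_pow_three_add_eight {k : ℝ} (hk : k ≠ 1) :
    η k ^ 3 + 8 = 9 * k * (k ^ 2 - 2 * k + 4) / (k - 1) ^ 3 := by
  have : k - 1 ≠ 0 := sub_ne_zero.mpr hk
  rw [η, div_pow, div_add' _ _ _ (pow_ne_zero 3 this)]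
  ring

lemma η_pow_three_sub_one {k : ℝ} (hk : k ≠ 1) :
    η k ^ 3 - 1 = 9 * (k ^ 2 + k + 1) / (k - 1) ^ 3 := by
  have : k - 1 ≠ 0 := sub_ne_zero.mpr hk
  rw [η, div_pow, div_sub' (pow_ne_zero 3 this)]
  ring

theorem J_invariant_under_involution_general (k : ℝ) (hk : k ≠ 1) :
    Jmod (η k) = Jmod k := by
  have hk₁ : k - 1 ≠ 0 := sub_ne_zero.mpr hk
  have hq := (sq_add_self_add_one_pos k).ne'
  have hcube : k ^ 3 - 1 = (k - 1) * (k ^ 2 + k + 1) := by ring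
  rw [Jmod, Jmod, η_pow_three_add_eight hk, η_pow_three_sub_one hk, hcube, η]
  field_simp
  ring

/-- The modular invariant J(k) = k³(k³+8)³/(64(k³-1)³) is invariant under
the involution η(k) = (k+2)/(k-1). -/
theorem J_invariant_under_involution (k : ℝ) (hk : k ≠ 1) (hη : (η k)^3 ≠ 1) :
    Jmod (η k) = Jmod k :=
  J_invariant_under_involution_general k hk
end

section
/- For the one-parameter family of frameworks F(λ), the linear constraint system forces all off-diagonal entries of the infinitesimal Gram matrix to be equal, with common value μ·(ω̇₁₁+ω̇₂₂+ω̇₃₃) where μ = λ(1-λ)/(2-6λ(1-λ)). Concretely: let q = λ(1,1,1) ∈ ℝ³, Eᵢ = eᵢ - q for i=1,2,3 and E_{jk} = eⱼ+e_k - q for {j,k} ⊂ {1,2,3}. If a symmetric matrix Ω ∈ Sym₃(ℝ) and a vector v ∈ ℝ³ satisfy ⟨Ω Eᵢ, Eᵢ⟩ = 2⟨Eᵢ, v⟩ for i=1,2,3 and ⟨Ω E_{jk}, E_{jk}⟩ = 2⟨E_{jk}, v⟩ for all pairs j<k, and 2-6λ(1-λ) ≠ 0, then Ω₁₂ = Ω₂₃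 = Ω₁₃ = μ·(Ω₁₁+Ω₂₂+Ω₃₃). -/
/-!
The quantity `g x = ⟨Ω x, x⟩ - 2 ⟨x, v⟩` is a quadratic polynomial in `x`, so its second difference
`g (a + b + c) - g (a + c) - g (b + c) + g c` is the bilinear form `2 ⟨Ω a, b⟩`. Taking `a = eⱼ`,
`b = eₖ`, `c = -q`, the constraints on `Eⱼ`, `Eₖ`, `E_{jk}` give `2 Ωⱼₖ = g (-q)` for every pair, so
all off-diagonal entries agree. Summing the three constraints on the `Eᵢ` and eliminating `⟨q, v⟩`
with `g (-q)` leaves `λ(1-λ) tr Ω = (2 - 6λ(1-λ)) Ωⱼₖ`.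
-/

open Matrix

section

variable {R n : Type*} [CommRing R] [Fintype n]

def constraintDefect (Ω : Matrix n n R) (v x : n → R) : R :=
  Ω *ᵥ x ⬝ᵥ x - 2 * (x ⬝ᵥ v)

theorem constraintDefect_add {Ω : Matrix n n R} (hΩ : Ω.IsSymm) (v a b : n → R) :
    constraintDefect Ω v (a + b) =
      constraintDefect Ω v a + constraintDefect Ω v b + 2 * (Ω *ᵥ a ⬝ᵥ b) := by
  have hsymm : Ω *ᵥ b ⬝ᵥ a = Ω *ᵥ a ⬝ᵥ b := by
    rw [dotProduct_comm, dotProduct_mulVec, ← mulVec_transpose, hΩ.eq]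
  simp only [constraintDefect, mulVec_add, add_dotProduct, dotProduct_add, hsymm]
  ring

theorem constraintDefect_add_add_sub {Ω : Matrix n n R} (hΩ : Ω.IsSymm) (v a b c : n → R) :
    constraintDefect Ω v (a + b + c) - constraintDefect Ω v (a + c) - constraintDefect Ω v (b + c)
      + constraintDefect Ω v c = 2 * (Ω *ᵥ a ⬝ᵥ b) := by
  rw [add_assoc, constraintDefect_add hΩ v a, constraintDefect_add hΩ v a, dotProduct_add]
  ring

theorem two_mul_apply_eq_constraintDefect [DecidableEq n] {Ω : Matrix n n R} (hΩ : Ω.IsSymm)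
    {v c : n → R} {j k : n} (hj : constraintDefect Ω v (Pi.single j 1 + c) = 0)
    (hk : constraintDefect Ω v (Pi.single k 1 + c) = 0)
    (hjk : constraintDefect Ω v (Pi.single j 1 + Pi.single k 1 + c) = 0) :
    2 * Ω j k = constraintDefect Ω v c := by
  have h := constraintDefect_add_add_sub hΩ v (Pi.single j 1) (Pi.single k 1) c
  rw [hj, hk, hjk, mulVec_single_one, dotProduct_single_one, col_apply, hΩ.apply] at h
  linear_combination -h

end

theorem mul_trace_eq_of_constraintDefect_eq_zero {R : Type*} [CommRing R]
    {Ω : Matrix (Fin 3) (Fin 3) R} (hΩ : Ω.IsSymm) {v : Fin 3 → R} {lam c : R}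
    (h01 : Ω 0 1 = c) (h12 : Ω 1 2 = c) (h02 : Ω 0 2 = c)
    (hc : 2 * c = constraintDefect Ω v (-fun _ => lam))
    (hdiag : ∀ i, constraintDefect Ω v (Pi.single i 1 - fun _ => lam) = 0) :
    lam * (1 - lam) * Ω.trace = (2 - 6 * lam * (1 - lam)) * c := by
  have h0 := hdiag 0
  have h1 := hdiag 1
  have h2 := hdiag 2
  simp only [constraintDefect, dotProduct, mulVec, Pi.sub_apply, Pi.neg_apply, Pi.single_apply,
    Fin.sum_univ_three, Fin.isValue, Fin.reduceEq, ↓reduceIte, hΩ.apply 0 1, hΩ.apply 0 2,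
    hΩ.apply 1 2, h01, h02, h12] at h0 h1 h2 hc
  rw [trace_fin_three]
  linear_combination lam * (h0 + h1 + h2) - (1 - 3 * lam) * hc

/-- For the framework F(λ): with q = λ(1,1,1), Eᵢ = eᵢ - q and
E_{jk} = eⱼ + e_k - q, if a symmetric Ω and a vector v satisfy
⟨Ω E, E⟩ = 2⟨E, v⟩ for all six edge vectors, and 2-6λ(1-λ) ≠ 0, then all
off-diagonal entries of Ω equal μ·(Ω₁₁+Ω₂₂+Ω₃₃) with
μ = λ(1-λ)/(2-6λ(1-λ)). -/
theorem framework_offdiagonal (lam : ℝ) (hlam : 2 - 6*lam*(1-lam) ≠ 0)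
    (Ω : Matrix (Fin 3) (Fin 3) ℝ) (hΩ : Ω.IsSymm) (v : Fin 3 → ℝ) :
    let q : Fin 3 → ℝ := fun _ => lam
    let e : Fin 3 → Fin 3 → ℝ := fun i => Pi.single i 1
    let E : Fin 3 → Fin 3 → ℝ := fun i => e i - q
    let F : Fin 3 → Fin 3 → Fin 3 → ℝ := fun j k => e j + e k - q
    let μ : ℝ := lam*(1-lam) / (2 - 6*lam*(1-lam))
    (∀ i : Fin 3, (Ω.mulVec (E i)) ⬝ᵥ (E i) = 2 * ((E i) ⬝ᵥ v)) →
    (∀ j k : Fin 3, j < k → (Ω.mulVec (F j k)) ⬝ᵥ (F j k) = 2 * ((F j k) ⬝ᵥ v)) →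
    Ω 0 1 = μ * (Ω 0 0 + Ω 1 1 + Ω 2 2) ∧
    Ω 1 2 = μ * (Ω 0 0 + Ω 1 1 + Ω 2 2) ∧
    Ω 0 2 = μ * (Ω 0 0 + Ω 1 1 + Ω 2 2) := by
  intro q e E F μ hE hF
  have hdiag (i : Fin 3) : constraintDefect Ω v (e i - q) = 0 := sub_eq_zero.mpr (hE i)
  have hoff (j k : Fin 3) (hjk : j < k) : 2 * Ω j k = constraintDefect Ω v (-q) := by
    refine two_mul_apply_eq_constraintDefect hΩ ?_ ?_ ?_ <;> rw [← sub_eq_add_neg]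
    exacts [hdiag j, hdiag k, sub_eq_zero.mpr (hF j k hjk)]
  have h12 : Ω 1 2 = Ω 0 1 := by linarith [hoff 0 1 (by decide), hoff 1 2 (by decide)]
  have h02 : Ω 0 2 = Ω 0 1 := by linarith [hoff 0 1 (by decide), hoff 0 2 (by decide)]
  have htrace :=
    mul_trace_eq_of_constraintDefect_eq_zero hΩ rfl h12 h02 (hoff 0 1 (by decide)) hdiag
  have h01 : Ω 0 1 = μ * (Ω 0 0 + Ω 1 1 + Ω 2 2) := by
    rw [trace_fin_three] at htrace
    rw [div_mul_eq_mul_div, eq_div_iff hlam]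
    linear_combination -htrace
  exact ⟨h01, h12.trans h01, h02.trans h01⟩
end
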